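/- For every integer n ≥ 2, the sum ∑ C_{r_1}·C_{r_2}·C_{r_3} over all triples (r_1,r_2,r_3) of nonnegative integers with r_1 ≥ 1, r_3 ≥ 1, r_2 ≥ 0 and r_1 + r_2 + r_3 = n − 1 equals C_{n+1} − 3·C_n + C_{n−1}. -/

import Mathlib

/-!
Write `m = n - 1` and split off the first entry, `r₂ + r₃ = s`, `r₁ + s = m`. By Segner's recurrence
`C_{s+1} = ∑_{i+j=s} C_i C_j`, dropping the `r₃ = 0` term leaves `C_{s+1} - C_s` for the inner sum.
The outer sum `∑_{r₁ ≥ 1} C_{r₁} (C_{s+1} - C_s)` is again two Segner convolutions minus the `r₁ = 0`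
term, namely `(C_{m+2} - C_{m+1}) - C_{m+1} - (C_{m+1} - C_m)`.
-/

open Finset Finset.Nat

section AntidiagonalSums

theorem sum_antidiagonalTuple_succ {M : Type*} [AddCommMonoid M] (k n : ℕ)
    (f : (Fin (k + 1) → ℕ) → M) :
    ∑ x ∈ antidiagonalTuple (k + 1) n, f x =
      ∑ p ∈ antidiagonal n, ∑ x ∈ antidiagonalTuple k p.2, f (Fin.cons p.1 x) := by
  rw [sum_sigma']
  refine sum_bij' (fun x _ => ⟨(x 0, ∑ i, Fin.tail x i), Fin.tail x⟩)
    (fun y _ => Fin.cons y.1.1 y.2) ?_ ?_ ?_ ?_ ?_ <;>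
    simp_all [mem_antidiagonalTuple, Fin.sum_univ_succ, Fin.tail]

theorem sum_antidiagonalTuple_three {M : Type*} [AddCommMonoid M] (n : ℕ)
    (f : (Fin 3 → ℕ) → M) :
    ∑ x ∈ antidiagonalTuple 3 n, f x =
      ∑ p ∈ antidiagonal n, ∑ q ∈ antidiagonal p.2, f ![p.1, q.1, q.2] := by
  simp_rw [sum_antidiagonalTuple_succ 2, sum_antidiagonalTuple_succ 1, antidiagonalTuple_one,
    sum_singleton]
  rfl

variable {M : Type*} [AddCommGroup M]

theorem sum_antidiagonal_ite_one_le_fst (m : ℕ) (g : ℕ × ℕ → M) :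
    ∑ p ∈ antidiagonal m, (if 1 ≤ p.1 then g p else 0) =
      ∑ p ∈ antidiagonal m, g p - g (0, m) := by
  have hfilter : (antidiagonal m).filter (fun p => 1 ≤ p.1) = (antidiagonal m).erase (0, m) := by
    ext ⟨a, b⟩
    simp
    omega
  rw [← sum_filter, hfilter, sum_erase_eq_sub (by simp)]

theorem sum_antidiagonal_ite_one_le_snd (m : ℕ) (g : ℕ × ℕ → M) :
    ∑ p ∈ antidiagonal m, (if 1 ≤ p.2 then g p else 0) =
      ∑ p ∈ antidiagonal m, g p - g (m, 0) := by
  have hfilter : (antidiagonal m).filter (fun p => 1 ≤ p.2) = (antidiagonal m).erase (m, 0) := by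
    ext ⟨a, b⟩
    simp
    omega
  rw [← sum_filter, hfilter, sum_erase_eq_sub (by simp)]

end AntidiagonalSums

theorem sum_antidiagonal_catalan_mul_catalan (m : ℕ) :
    ∑ p ∈ antidiagonal m, (catalan p.1 * catalan p.2 : ℤ) = catalan (m + 1) := by
  rw [catalan_succ']
  push_cast
  rfl

theorem sum_antidiagonal_catalan_mul_catalan_succ (m : ℕ) :
    ∑ p ∈ antidiagonal m, (catalan p.1 * catalan (p.2 + 1) : ℤ) =
      catalan (m + 2) - catalan (m + 1) := by
  rw [← sum_antidiagonal_catalan_mul_catalan, sum_antidiagonal_succ']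
  simp only [catalan_zero, Nat.cast_one, mul_one, add_sub_cancel_left]

theorem sum_antidiagonal_ite_one_le_snd_catalan_mul_catalan (s : ℕ) :
    ∑ p ∈ antidiagonal s, (if 1 ≤ p.2 then catalan p.1 * catalan p.2 else 0 : ℤ) =
      catalan (s + 1) - catalan s := by
  rw [sum_antidiagonal_ite_one_le_snd, sum_antidiagonal_catalan_mul_catalan, catalan_zero,
    Nat.cast_one, mul_one]

/-- For every n ≥ 2, ∑ C_{r₁}C_{r₂}C_{r₃} over triples with r₁ ≥ 1, r₃ ≥ 1,
r₂ ≥ 0 and r₁+r₂+r₃ = n−1 equals C_{n+1} − 3·C_n + C_{n−1}. -/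
theorem stmt_11 (n : ℕ) (hn : 2 ≤ n) :
    (∑ r ∈ (Finset.Nat.antidiagonalTuple 3 (n - 1)).filter (fun r => 1 ≤ r 0 ∧ 1 ≤ r 2),
        ∏ i, (catalan (r i) : ℤ)) =
      (catalan (n + 1) : ℤ) - 3 * catalan n + catalan (n - 1) := by
  obtain ⟨m, rfl⟩ : ∃ m, n = m + 1 := ⟨n - 1, by omega⟩
  rw [sum_filter, Nat.add_sub_cancel, sum_antidiagonalTuple_three]
  simp only [Fin.prod_univ_three, Matrix.cons_val_zero, Matrix.cons_val_one, Matrix.cons_val,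
    ite_and, sum_ite_irrel, sum_const_zero]
  calc _ = ∑ p ∈ antidiagonal m,
        if 1 ≤ p.1 then (catalan p.1 * (catalan (p.2 + 1) - catalan p.2) : ℤ) else 0 := by
        refine sum_congr rfl fun p _ => if_congr Iff.rfl ?_ rfl
        rw [← sum_antidiagonal_ite_one_le_snd_catalan_mul_catalan, mul_sum]
        exact sum_congr rfl fun q _ => by rw [mul_ite_zero, mul_assoc]
    _ = _ := by
        rw [sum_antidiagonal_ite_one_le_fst]
        simp only [mul_sub, sum_sub_distrib, sum_antidiagonal_catalan_mul_catalan_succ,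
          sum_antidiagonal_catalan_mul_catalan, catalan_zero, Nat.cast_one, one_mul]
        ring
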